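/- arXiv:1905.02642 — 3 statements merged into one kernel-verified Lean document; each statement's English description precedes it below -/
import Mathlib

section
/- Let ψ be three times differentiable with ψ' > 0 and w(φ) = sqrt(ψ''(φ)² + ψ'(φ)²(1+ψ'(φ))²) > 0. Define T̃(φ) = (ψ''(φ) − i·ψ'(φ)(1+ψ'(φ)))/w(φ) · exp(i·ψ(φ)). Then T̃'(φ) = i·h̃(φ)·T̃(φ), where h̃(φ) = (1+ψ'(φ))·[ψ'(φ)·(ψ'''(φ) + ψ'(φ)² + ψ'(φ)³) − ψ''(φ)²]/w(φ)². -/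
/-!
With `N = ψ'' - i ψ' (1 + ψ')` we have `w = ‖N‖`, so `T = (N / ‖N‖) e^{iψ}`. The unit vector
`N / ‖N‖` turns with angular speed `Im (conj N · N') / ‖N‖²` and the factor `e^{iψ}` adds `ψ'`;
their sum is `h`.
-/

open Complex

theorem HasDerivAt.div_norm {N : ℝ → ℂ} {N' : ℂ} {t : ℝ} (hN : HasDerivAt N N' t)
    (h0 : N t ≠ 0) :
    HasDerivAt (fun s => N s / (‖N s‖ : ℂ))
      (I * ((starRingEnd ℂ (N t) * N').im / ‖N t‖ ^ 2 : ℝ) * (N t / ‖N t‖)) t := by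
  have hnorm : HasDerivAt (fun s => ‖N s‖) ((starRingEnd ℂ (N t) * N').re / ‖N t‖) t := by
    have := hN.norm_sq.sqrt (by positivity)
    simp only [Real.sqrt_sq (norm_nonneg _), Complex.inner] at this
    convert this using 1
    field_simp
  have hn : (‖N t‖ : ℂ) ≠ 0 := by exact_mod_cast norm_ne_zero_iff.mpr h0
  refine (hN.div hnorm.ofReal_comp hn).congr_deriv ?_
  -- `‖N‖² N' = N (conj N N')`, and the real part of `conj N N'` cancels the radial term.
  have hsq : (‖N t‖ : ℂ) ^ 2 = N t * starRingEnd ℂ (N t) := by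
    rw [mul_conj, normSq_eq_norm_sq]; push_cast; ring
  have hre := re_add_im (starRingEnd ℂ (N t) * N')
  push_cast
  field_simp
  rw [mul_comm N' (starRingEnd ℂ (N t))]
  linear_combination (-N t) * hre + N' * hsq

theorem HasDerivAt.mul_exp_ofReal_mul_I {u : ℝ → ℂ} {θ : ℝ → ℝ} {k θ' t : ℝ}
    (hu : HasDerivAt u (I * k * u t) t) (hθ : HasDerivAt θ θ' t) :
    HasDerivAt (fun s => u s * Complex.exp ((θ s : ℂ) * I))
      (I * (k + θ' : ℝ) * (u t * Complex.exp ((θ t : ℂ) * I))) t := by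
  refine (hu.mul (hθ.ofReal_comp.mul_const I).cexp).congr_deriv ?_
  push_cast
  ring

theorem norm_ofReal_sub_I_mul_ofReal (a b : ℝ) : ‖(a : ℂ) - I * b‖ = √(a ^ 2 + b ^ 2) := by
  rw [norm_eq_sqrt_sq_add_sq]
  simp

theorem im_conj_mul_ofReal_sub_I_mul_ofReal (a b c d : ℝ) :
    (starRingEnd ℂ ((a : ℂ) - I * b) * ((c : ℂ) - I * d)).im = b * c - a * d := by
  simp only [map_sub, conj_ofReal, map_mul, conj_I, neg_mul, sub_neg_eq_add, mul_im, add_re,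
    ofReal_re, mul_re, I_re, zero_mul, I_im, ofReal_im, mul_zero, sub_self, add_zero, sub_im,
    one_mul, zero_add, zero_sub, mul_neg, add_im, sub_re, sub_zero]
  ring

theorem deriv_unit_tangent_driven_general
    (ψ ψ' ψ'' ψ''' : ℝ → ℝ)
    (hd1 : ∀ t, HasDerivAt ψ (ψ' t) t)
    (hd2 : ∀ t, HasDerivAt ψ' (ψ'' t) t)
    (hd3 : ∀ t, HasDerivAt ψ'' (ψ''' t) t)
    (w : ℝ → ℝ)
    (hw : ∀ t, w t = Real.sqrt ((ψ'' t) ^ 2 + (ψ' t) ^ 2 * (1 + ψ' t) ^ 2))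
    (hwpos : ∀ t, 0 < w t)
    (T : ℝ → ℂ)
    (hT : ∀ t, T t =
      (((ψ'' t : ℂ) - Complex.I * (ψ' t : ℂ) * (1 + (ψ' t : ℂ))) / (w t : ℂ)) *
        Complex.exp ((ψ t : ℂ) * Complex.I))
    (h : ℝ → ℝ)
    (hh : ∀ t, h t =
      (1 + ψ' t) * (ψ' t * (ψ''' t + (ψ' t) ^ 2 + (ψ' t) ^ 3) - (ψ'' t) ^ 2) / (w t) ^ 2)
    (φ : ℝ) :
    deriv T φ = Complex.I * (h φ : ℂ) * T φ := by
  set N : ℝ → ℂ := fun s => (ψ'' s : ℂ) - I * ((ψ' s * (1 + ψ' s) : ℝ) : ℂ) with hNdef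
  have hw_norm : ∀ s, w s = ‖N s‖ := fun s => by
    rw [hw, hNdef, norm_ofReal_sub_I_mul_ofReal, mul_pow]
  have hT_eq : T = fun s => N s / (‖N s‖ : ℂ) * Complex.exp (ψ s * I) := by
    funext s
    rw [hT, ← hw_norm, hNdef]
    push_cast
    ring
  have hN : HasDerivAt N ((ψ''' φ : ℂ) - I * ((ψ'' φ * (1 + 2 * ψ' φ) : ℝ) : ℂ)) φ := by
    refine ((hd3 φ).ofReal_comp.sub (((hd2 φ).mul ((hd2 φ).const_add 1)).ofReal_comp.const_mul
      I)).congr_deriv ?_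
    push_cast
    ring
  have hN0 : N φ ≠ 0 := norm_ne_zero_iff.mp (hw_norm φ ▸ (hwpos φ).ne')
  have hw_sq : w φ ^ 2 = (ψ'' φ) ^ 2 + (ψ' φ) ^ 2 * (1 + ψ' φ) ^ 2 := by
    rw [hw]; exact Real.sq_sqrt (by positivity)
  have hw0 := (hwpos φ).ne'
  rw [hT_eq, ((hN.div_norm hN0).mul_exp_ofReal_mul_I (hd1 φ)).deriv]
  congr 3
  rw [← hw_norm, hh, hNdef, im_conj_mul_ofReal_sub_I_mul_ofReal]
  field_simp
  linear_combination ψ' φ * hw_sq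

theorem deriv_unit_tangent_driven
    (ψ ψ' ψ'' ψ''' : ℝ → ℝ)
    (hd1 : ∀ t, HasDerivAt ψ (ψ' t) t)
    (hd2 : ∀ t, HasDerivAt ψ' (ψ'' t) t)
    (hd3 : ∀ t, HasDerivAt ψ'' (ψ''' t) t)
    (hpos : ∀ t, 0 < ψ' t)
    (w : ℝ → ℝ)
    (hw : ∀ t, w t = Real.sqrt ((ψ'' t) ^ 2 + (ψ' t) ^ 2 * (1 + ψ' t) ^ 2))
    (hwpos : ∀ t, 0 < w t)
    (T : ℝ → ℂ)
    (hT : ∀ t, T t =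
      (((ψ'' t : ℂ) - Complex.I * (ψ' t : ℂ) * (1 + (ψ' t : ℂ))) / (w t : ℂ)) *
        Complex.exp ((ψ t : ℂ) * Complex.I))
    (h : ℝ → ℝ)
    (hh : ∀ t, h t =
      (1 + ψ' t) * (ψ' t * (ψ''' t + (ψ' t) ^ 2 + (ψ' t) ^ 3) - (ψ'' t) ^ 2) / (w t) ^ 2)
    (φ : ℝ) :
    deriv T φ = Complex.I * (h φ : ℂ) * T φ :=
  deriv_unit_tangent_driven_general ψ ψ' ψ'' ψ''' hd1 hd2 hd3 w hw hwpos T hT h hh φ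
end

section
/- Let ψ be three times differentiable with ψ' > 0, a > 0, and w(φ) = sqrt(ψ''² + ψ'²(1+ψ')²) > 0. The oriented curvature of the drive-gear centrode X_P(φ) = (aψ'/(1+ψ'))·e^{−iφ} is κ(φ) = (1+ψ'(φ))³·[ψ'(φ)(ψ'''(φ) − ψ'(φ) − ψ'(φ)²) − 2ψ''(φ)²] / (a·w(φ)³). -/
/-! Writing the velocity as `v = ‖v‖ T` and differentiating gives `v' = (‖v‖' + ‖v‖² κ i) T`,
so `κ ‖v‖³ = Im (conj v · v')`. For the clockwise polar curve `r e^{-iφ}` this reads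
`κ (r'² + r²)^{3/2} = r r'' - r² - 2 r'²`; with `r = aψ'/(1+ψ')` one has
`r'² + r² = a² w² / (1+ψ')⁴`, and the formula follows by clearing denominators. -/

open Complex ComplexConjugate

theorem HasDerivAt.mul_exp_neg_mul_I {f : ℝ → ℂ} {f' : ℂ} {t : ℝ} (hf : HasDerivAt f f' t) :
    HasDerivAt (fun s : ℝ => f s * Complex.exp (-(s : ℂ) * I))
      ((f' - f t * I) * Complex.exp (-(t : ℂ) * I)) t := by
  have he : HasDerivAt (fun s : ℝ => Complex.exp (-(s : ℂ) * I))
      (-I * Complex.exp (-(t : ℂ) * I)) t := by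
    simpa [mul_comm] using ((hasDerivAt_id (t : ℂ)).neg.mul_const I).cexp.comp_ofReal
  exact (hf.mul he).congr_deriv (by ring)

theorem curvature_mul_norm_pow_three_eq_im_conj_mul {v : ℝ → ℂ} {v' : ℂ} {φ κ : ℝ}
    (hv : HasDerivAt v v' φ) (hv0 : v φ ≠ 0)
    (hκ : deriv (fun t => v t / (‖v t‖ : ℂ)) φ = (‖v φ‖ : ℂ) * κ * I * (v φ / ‖v φ‖)) :
    κ * ‖v φ‖ ^ 3 = (conj (v φ) * v').im := by
  set T : ℝ → ℂ := fun t => v t / (‖v t‖ : ℂ)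
  have hn0 : (‖v φ‖ : ℂ) ≠ 0 := by exact_mod_cast norm_ne_zero_iff.mpr hv0
  obtain ⟨n', hn'⟩ : ∃ n', HasDerivAt (fun t => ‖v t‖) n' φ :=
    ⟨_, (hv.differentiableAt.norm ℂ hv0).hasDerivAt⟩
  have hT : HasDerivAt T (deriv T φ) φ :=
    (hv.differentiableAt.div hn'.ofReal_comp.differentiableAt hn0).hasDerivAt
  -- `v = ‖v‖ T` holds everywhere, also where `v` vanishes and `T` is the junk value `0`.
  have hvT : v = fun t => (‖v t‖ : ℂ) * T t := by
    funext t
    by_cases h : v t = 0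
    · simp [T, h]
    · exact (mul_div_cancel₀ _ (by exact_mod_cast norm_ne_zero_iff.mpr h)).symm
  have hv' : v' = (n' + (‖v φ‖ : ℂ) ^ 2 * κ * I) * (v φ / ‖v φ‖) := by
    rw [hvT] at hv
    rw [hv.unique (hn'.ofReal_comp.mul hT), hκ]
    ring
  have hconj : conj (v φ) * v φ = (‖v φ‖ : ℂ) ^ 2 := by
    rw [mul_comm, Complex.mul_conj, Complex.normSq_eq_norm_sq]; push_cast; rfl
  have hconj_mul : conj (v φ) * v' = (n' * ‖v φ‖ : ℝ) + ((κ * ‖v φ‖ ^ 3 : ℝ) : ℂ) * I := by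
    rw [hv']
    field_simp
    push_cast
    linear_combination (n' + (‖v φ‖ : ℂ) ^ 2 * κ * I) * hconj
  rw [hconj_mul]
  simp [-ofReal_pow]

theorem curvature_mul_sqrt_pow_three_of_clockwise_polar {r r' : ℝ → ℝ} {r'' φ κ : ℝ}
    (hr : ∀ t, HasDerivAt r (r' t) t) (hr' : HasDerivAt r' r'' φ)
    (hreg : 0 < r' φ ^ 2 + r φ ^ 2) (X : ℝ → ℂ)
    (hX : ∀ t, X t = (r t : ℂ) * Complex.exp (-(t : ℂ) * I))
    (hκ : deriv (fun t => deriv X t / (‖deriv X t‖ : ℂ)) φ =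
      (‖deriv X φ‖ : ℂ) * κ * I * (deriv X φ / ‖deriv X φ‖)) :
    κ * √(r' φ ^ 2 + r φ ^ 2) ^ 3 = r φ * r'' - r φ ^ 2 - 2 * r' φ ^ 2 := by
  set e : ℂ := Complex.exp (-(φ : ℂ) * I)
  have hX' : deriv X = fun t => ((r' t : ℂ) - r t * I) * Complex.exp (-(t : ℂ) * I) := by
    funext t
    rw [funext hX]
    exact (hr t).ofReal_comp.mul_exp_neg_mul_I.deriv
  have hX'' : HasDerivAt (deriv X) (((r'' : ℂ) - r' φ * I - (r' φ - r φ * I) * I) * e) φ := by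
    rw [hX']
    exact (hr'.ofReal_comp.sub ((hr φ).ofReal_comp.mul_const I)).mul_exp_neg_mul_I
  have hnorm : ‖deriv X φ‖ = √(r' φ ^ 2 + r φ ^ 2) := by
    rw [hX', norm_mul, Complex.norm_exp]
    simp [Complex.norm_def, Complex.normSq_apply, sq]
  have he : conj e * e = 1 := by
    rw [mul_comm, Complex.mul_conj, Complex.normSq_eq_norm_sq]
    simp [e, Complex.norm_exp]
  have hcurv := curvature_mul_norm_pow_three_eq_im_conj_mul hX'' (by
    rw [← norm_ne_zero_iff, hnorm]; exact (Real.sqrt_pos.mpr hreg).ne') hκ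
  rw [hnorm] at hcurv
  have hprod : conj (deriv X φ) * (((r'' : ℂ) - r' φ * I - (r' φ - r φ * I) * I) * e) =
      ((r' φ : ℂ) + r φ * I) * ((r'' : ℂ) - r' φ * I - (r' φ - r φ * I) * I) * (conj e * e) := by
    simp only [hX', map_mul, map_sub, Complex.conj_ofReal, Complex.conj_I]
    ring
  rw [hcurv, hprod, he, mul_one]
  simp only [mul_im, mul_re, add_re, add_im, sub_re, sub_im, ofReal_re, ofReal_im, I_re, I_im]
  ring

theorem hasDerivAt_const_mul_div_one_add {u : ℝ → ℝ} {u' t : ℝ} (a : ℝ)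
    (hu : HasDerivAt u u' t) (h : 1 + u t ≠ 0) :
    HasDerivAt (fun s => a * u s / (1 + u s)) (a * u' / (1 + u t) ^ 2) t := by
  refine ((hu.const_mul a).div (hu.const_add 1) h).congr_deriv ?_
  field_simp
  ring

theorem hasDerivAt_const_mul_div_one_add_sq {u v : ℝ → ℝ} {u' v' t : ℝ} (a : ℝ)
    (hu : HasDerivAt u u' t) (hv : HasDerivAt v v' t) (h : 1 + v t ≠ 0) :
    HasDerivAt (fun s => a * u s / (1 + v s) ^ 2)
      (a * (u' * (1 + v t) - 2 * u t * v') / (1 + v t) ^ 3) t := by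
  refine ((hu.const_mul a).div ((hv.const_add 1).fun_pow 2) (pow_ne_zero 2 h)).congr_deriv ?_
  field_simp
  ring

theorem curvature_centrode_drive_general
    (ψ' ψ'' ψ''' : ℝ → ℝ) (a : ℝ) (ha : 0 < a)
    (hd2 : ∀ t, HasDerivAt ψ' (ψ'' t) t)
    (hd3 : ∀ t, HasDerivAt ψ'' (ψ''' t) t)
    (hpos : ∀ t, 0 < ψ' t)
    (w : ℝ → ℝ)
    (hw : ∀ t, w t = Real.sqrt ((ψ'' t) ^ 2 + (ψ' t) ^ 2 * (1 + ψ' t) ^ 2))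
    (X_P : ℝ → ℂ)
    (hX : ∀ t, X_P t =
      ((a * ψ' t / (1 + ψ' t) : ℝ) : ℂ) * Complex.exp (-(t : ℂ) * Complex.I))
    (T : ℝ → ℂ)
    (hT : ∀ t, T t = deriv X_P t / (‖deriv X_P t‖ : ℂ))
    (κ : ℝ → ℝ)
    (hκ : ∀ t, deriv T t =
      ((‖deriv X_P t‖ : ℝ) : ℂ) * (κ t : ℂ) * Complex.I * T t)
    (φ : ℝ) :
    κ φ = (1 + ψ' φ) ^ 3 *
        (ψ' φ * (ψ''' φ - ψ' φ - (ψ' φ) ^ 2) - 2 * (ψ'' φ) ^ 2) / (a * (w φ) ^ 3) := by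
  obtain rfl : T = _ := funext hT
  have hden : ∀ t, 0 < 1 + ψ' t := fun t => by linarith [hpos t]
  have hψ'φ := hpos φ
  have hdenφ := hden φ
  have hradius : (a * ψ'' φ / (1 + ψ' φ) ^ 2) ^ 2 + (a * ψ' φ / (1 + ψ' φ)) ^ 2 =
      (a / (1 + ψ' φ) ^ 2) ^ 2 * (ψ'' φ ^ 2 + ψ' φ ^ 2 * (1 + ψ' φ) ^ 2) := by
    field_simp
  have key := curvature_mul_sqrt_pow_three_of_clockwise_polar
    (fun t => hasDerivAt_const_mul_div_one_add a (hd2 t) (hden t).ne')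
    (hasDerivAt_const_mul_div_one_add_sq a (hd3 φ) (hd2 φ) hdenφ.ne')
    (by rw [hradius]; positivity) X_P hX (hκ φ)
  rw [hradius, Real.sqrt_mul (by positivity), Real.sqrt_sq (by positivity), ← hw φ] at key
  have hwpos : 0 < w φ := hw φ ▸ Real.sqrt_pos.mpr (by positivity)
  rw [eq_div_iff (by positivity)]
  field_simp at key
  linear_combination key

theorem curvature_centrode_drive
    (ψ ψ' ψ'' ψ''' : ℝ → ℝ) (a : ℝ) (ha : 0 < a)
    (hd1 : ∀ t, HasDerivAt ψ (ψ' t) t)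
    (hd2 : ∀ t, HasDerivAt ψ' (ψ'' t) t)
    (hd3 : ∀ t, HasDerivAt ψ'' (ψ''' t) t)
    (hpos : ∀ t, 0 < ψ' t)
    (w : ℝ → ℝ)
    (hw : ∀ t, w t = Real.sqrt ((ψ'' t) ^ 2 + (ψ' t) ^ 2 * (1 + ψ' t) ^ 2))
    (hwpos : ∀ t, 0 < w t)
    (X_P : ℝ → ℂ)
    (hX : ∀ t, X_P t =
      ((a * ψ' t / (1 + ψ' t) : ℝ) : ℂ) * Complex.exp (-(t : ℂ) * Complex.I))
    (T : ℝ → ℂ)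
    (hT : ∀ t, T t = deriv X_P t / (‖deriv X_P t‖ : ℂ))
    (κ : ℝ → ℝ)
    (hκ : ∀ t, deriv T t =
      ((‖deriv X_P t‖ : ℝ) : ℂ) * (κ t : ℂ) * Complex.I * T t)
    (φ : ℝ) :
    κ φ = (1 + ψ' φ) ^ 3 *
        (ψ' φ * (ψ''' φ - ψ' φ - (ψ' φ) ^ 2) - 2 * (ψ'' φ) ^ 2) / (a * (w φ) ^ 3) :=
  curvature_centrode_drive_general ψ' ψ'' ψ''' a ha hd2 hd3 hpos w hw X_P hX T hT κ hκ φ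
end

section
/- Let X_P be a regular curve in ℂ with unit tangent T satisfying T'(φ) = i·h(φ)·T(φ), h real and nonzero, and let κ(φ) = h(φ)/|X_P'(φ)| be its curvature. Fix α ∈ [0, π/2). The envelope of the family of lines X = X_P(φ) + μ·T(φ)·e^{±iα} (μ ∈ ℝ), i.e. the lines through X_P(φ) making constant angle ±α with the tangent, is the base curve X_B±(φ) = X_P(φ) ± (sin α / κ(φ))·T(φ)·e^{±iα}. -/
/-!
Since `ext A B = Im (conj A * B)`, the lines are `Im (ū (X - X_P)) = 0` for the unit
direction `u = T·e^{iεα}`. Because `u' = i h u`, the `φ`-derivative of the line equation reads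
`-h · Re (ū (X - X_P)) = Im (ū X_P')`, so `ū (X - X_P)` is the real number `-Im (ū X_P') / h`,
and `|u| = 1` recovers `X`. Finally `X_P' = |X_P'| T` gives
`Im (ū X_P') = -|X_P'| sin (εα) = -ε |X_P'| sin α`, whence the coefficient `ε sin α / κ`.
-/

noncomputable def ext (A B : ℂ) : ℂ :=
  Complex.I / 2 * (A * (starRingEnd ℂ) B - (starRingEnd ℂ) A * B)

open ComplexConjugate

theorem ext_eq_im (A B : ℂ) : ext A B = ((conj A * B).im : ℂ) := by
  have h := Complex.sub_conj (conj A * B)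
  rw [map_mul, Complex.conj_conj, Complex.ofReal_mul, Complex.ofReal_ofNat] at h
  rw [ext]
  linear_combination (-Complex.I / 2) * h - ((conj A * B).im : ℂ) * Complex.I_sq

theorem ext_I_mul (h : ℝ) (u Y : ℂ) :
    ext (Complex.I * h * u) Y = (-(h * (conj u * Y).re) : ℝ) := by
  have : conj (Complex.I * h * u) * Y = ((-h : ℝ) : ℂ) * (Complex.I * (conj u * Y)) := by
    rw [map_mul, map_mul, Complex.conj_I, Complex.conj_ofReal]; push_cast; ring
  rw [ext_eq_im, this, Complex.im_ofReal_mul, Complex.I_mul_im, neg_mul]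

theorem HasDerivAt.ext {A B : ℝ → ℂ} {A' B' : ℂ} {t : ℝ} (hA : HasDerivAt A A' t)
    (hB : HasDerivAt B B' t) :
    HasDerivAt (fun s => ext (A s) (B s)) (ext A' (B t) + ext (A t) B') t := by
  have hA' : HasDerivAt (fun s => conj (A s)) (conj A') t := hA.star
  have hB' : HasDerivAt (fun s => conj (B s)) (conj B') t := hB.star
  refine (((hA.mul hB').sub (hA'.mul hB)).const_mul (Complex.I / 2)).congr_deriv ?_
  simp only [_root_.ext]; ring

theorem ext_eq_zero_and_ext_I_mul_eq_iff {u Y : ℂ} (hu : ‖u‖ = 1) {h c : ℝ} (hh : h ≠ 0) :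
    (ext u Y = 0 ∧ ext (Complex.I * h * u) Y = c) ↔ Y = ((-c / h : ℝ) : ℂ) * u := by
  have hu' : conj u * u = 1 := by rw [RCLike.conj_mul, hu]; simp
  rw [ext_I_mul, ext_eq_im, Complex.ofReal_eq_zero, Complex.ofReal_inj]
  calc ((conj u * Y).im = 0 ∧ -(h * (conj u * Y).re) = c)
      ↔ conj u * Y = ((-c / h : ℝ) : ℂ) := by
        rw [Complex.ext_iff, Complex.ofReal_re, Complex.ofReal_im, and_comm]
        refine and_congr_left' ⟨fun H => ?_, fun H => ?_⟩
        · field_simp; linarith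
        · rw [H]; field_simp
    _ ↔ Y = ((-c / h : ℝ) : ℂ) * u := by
        constructor
        · intro hw; rw [← hw]; linear_combination (-Y) * hu'
        · rintro rfl; linear_combination ((-c / h : ℝ) : ℂ) * hu'

theorem envelope_of_rotating_lines_iff {P u : ℝ → ℂ} {P' : ℂ} {h t : ℝ}
    (hP : HasDerivAt P P' t) (hu : HasDerivAt u (Complex.I * h * u t) t) (hunit : ‖u t‖ = 1)
    (hh : h ≠ 0) (X : ℂ) :
    (ext (u t) X = ext (P t + u t) (P t) ∧
      ext (deriv u t) X = deriv (fun s => ext (P s + u s) (P s)) t) ↔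
    X = P t + ((-(conj (u t) * P').im / h : ℝ) : ℂ) * u t := by
  have hPu : HasDerivAt (fun s => P s + u s) (P' + Complex.I * h * u t) t := hP.add hu
  rw [hu.deriv, (hPu.ext hP).deriv]
  have line : ext (u t) X - ext (P t + u t) (P t) = ext (u t) (X - P t) := by
    simp only [_root_.ext, map_add, map_sub]; ring
  have tangency : ext (Complex.I * h * u t) X
      - (ext (P' + Complex.I * h * u t) (P t) + ext (P t + u t) P')
      = ext (Complex.I * h * u t) (X - P t) - (conj (u t) * P').im := by
    rw [← ext_eq_im]; simp only [_root_.ext, map_add, map_sub, map_mul]; ring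
  rw [← sub_eq_zero, line, ← sub_eq_zero (a := ext _ X), tangency, sub_eq_zero,
    ext_eq_zero_and_ext_I_mul_eq_iff hunit hh, sub_eq_iff_eq_add']

theorem Complex.norm_div_norm_self {z : ℂ} (hz : z ≠ 0) : ‖z / (‖z‖ : ℂ)‖ = 1 := by
  rw [norm_div, Complex.norm_real, norm_norm, div_self (norm_ne_zero_iff.2 hz)]

theorem Complex.conj_div_norm_self_mul (z : ℂ) : conj (z / (‖z‖ : ℂ)) * z = ‖z‖ := by
  rcases eq_or_ne z 0 with rfl | hz
  · simp
  have hz' : (‖z‖ : ℂ) ≠ 0 := Complex.ofReal_ne_zero.2 (norm_ne_zero_iff.2 hz)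
  rw [map_div₀, Complex.conj_ofReal, div_mul_eq_mul_div, Complex.conj_mul', div_eq_iff hz']
  ring

theorem Real.sin_sign_mul {ε : ℝ} (hε : ε = 1 ∨ ε = -1) (α : ℝ) :
    Real.sin (ε * α) = ε * Real.sin α := by
  rcases hε with rfl | rfl <;> simp [Real.sin_neg]

theorem base_curve_envelope_general
    (X_P T : ℝ → ℂ) (h κ : ℝ → ℝ) (α ε : ℝ)
    (hε : ε = 1 ∨ ε = -1)
    (hreg : ∀ t, deriv X_P t ≠ 0)
    (hT : ∀ t, T t = deriv X_P t / ((‖deriv X_P t‖ : ℝ) : ℂ))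
    (hT' : ∀ t, HasDerivAt T (Complex.I * (h t : ℂ) * T t) t)
    (hh : ∀ t, h t ≠ 0)
    (hκ : ∀ t, κ t = h t / ‖deriv X_P t‖)
    (A B : ℝ → ℂ)
    (hA : ∀ t, A t = X_P t + T t * Complex.exp ((ε : ℂ) * α * Complex.I))
    (hB : ∀ t, B t = X_P t)
    (φ : ℝ) :
    ∀ X : ℂ,
      (ext (A φ - B φ) X = ext (A φ) (B φ) ∧
       ext (deriv (fun t => A t - B t) φ) X = deriv (fun t => ext (A t) (B t)) φ) ↔
      X = X_P φ + (ε : ℂ) * ((Real.sin α / κ φ : ℝ) : ℂ) * T φ *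
            Complex.exp ((ε : ℂ) * α * Complex.I) := by
  intro X
  set E := Complex.exp ((ε : ℂ) * α * Complex.I) with hE
  have hE' : E = Complex.exp ((ε * α : ℝ) * Complex.I) := by rw [hE]; push_cast; rfl
  have hXP : HasDerivAt X_P (deriv X_P φ) φ :=
    (differentiableAt_of_deriv_ne_zero (hreg φ)).hasDerivAt
  have hTφ := hT φ
  have hκφ := hκ φ
  have hD := hreg φ
  generalize deriv X_P φ = D at hXP hTφ hκφ hD
  have hunit : ‖T φ * E‖ = 1 := by
    rw [norm_mul, hTφ, Complex.norm_div_norm_self hD, hE', Complex.norm_exp_ofReal_mul_I, one_mul]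
  have hu : HasDerivAt (fun t => T t * E) (Complex.I * h φ * (T φ * E)) φ := by
    simpa only [mul_assoc] using (hT' φ).mul_const E
  have hcoeff : -(conj (T φ * E) * D).im / h φ = ε * (Real.sin α / κ φ) := by
    have hw : conj (T φ * E) * D = ‖D‖ * conj E := by
      rw [map_mul, mul_right_comm, hTφ, Complex.conj_div_norm_self_mul, mul_comm]
    rw [hw, Complex.im_ofReal_mul, Complex.conj_im, hE', Complex.exp_ofReal_mul_I_im,
      Real.sin_sign_mul hε, hκφ]
    field_simp
  simp only [hA, hB, add_sub_cancel_left]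
  rw [envelope_of_rotating_lines_iff hXP hu hunit (hh φ), hcoeff]
  push_cast; ring_nf

/-- The envelope of the lines through `X_P(φ)` making constant angle `±α` with the
tangent is the base curve `X_B±(φ) = X_P(φ) ± (sin α / κ(φ))·T(φ)·e^{±iα}`. -/
theorem base_curve_envelope
    (X_P T : ℝ → ℂ) (h κ : ℝ → ℝ) (α ε : ℝ)
    (hε : ε = 1 ∨ ε = -1)
    (hα : 0 ≤ α ∧ α < Real.pi / 2)
    (hreg : ∀ t, deriv X_P t ≠ 0)
    (hT : ∀ t, T t = deriv X_P t / ((‖deriv X_P t‖ : ℝ) : ℂ))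
    (hT' : ∀ t, HasDerivAt T (Complex.I * (h t : ℂ) * T t) t)
    (hh : ∀ t, h t ≠ 0)
    (hκ : ∀ t, κ t = h t / ‖deriv X_P t‖)
    (A B : ℝ → ℂ)
    (hA : ∀ t, A t = X_P t + T t * Complex.exp ((ε : ℂ) * α * Complex.I))
    (hB : ∀ t, B t = X_P t)
    (φ : ℝ) :
    ∀ X : ℂ,
      (ext (A φ - B φ) X = ext (A φ) (B φ) ∧
       ext (deriv (fun t => A t - B t) φ) X = deriv (fun t => ext (A t) (B t)) φ) ↔
      X = X_P φ + (ε : ℂ) * ((Real.sin α / κ φ : ℝ) : ℂ) * T φ *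
            Complex.exp ((ε : ℂ) * α * Complex.I) :=
  base_curve_envelope_general X_P T h κ α ε hε hreg hT hT' hh hκ A B hA hB φ
end
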